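/- arXiv:2604.00951 — 2 statements merged into one kernel-verified Lean document; each statement's English description precedes it below -/
import Mathlib

section
/- Let T ≥ 1 and τ ∈ (0, π/2) with 2^T·τ/π ∉ ℤ, and let Y be a random variable on {0,…,2^T−1} with probability mass function P_τ(l) = [sin²(2^T τ)/2^(2T+1)] · [ 1/sin²(τ − lπ/2^T) + 1/sin²(τ + lπ/2^T) ]. Then E[(sin²(π·Y/2^T) − sin²τ)²] = 2^(−(T+1)) · sin²(2^T τ) ≤ 2^(−(T+1)); in particular the mean squared error of the QBOOT estimator is at most 2^(−T−1) uniformly in τ, so MSE = O(2^(−T)). -/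
open Real

lemma sum_cos_zero (N : ℕ) (hN : 2 ≤ N) (x : ℝ) :
    ∑ l ∈ Finset.range N, Real.cos (2 * π * l / N + x) = 0 := by
  have hroot : IsPrimitiveRoot (Complex.exp (2 * ↑π * Complex.I / ↑N)) N :=
    Complex.isPrimitiveRoot_exp N (by omega)
  have hsum : ∑ l ∈ Finset.range N, Complex.exp (2 * ↑π * Complex.I / ↑N) ^ l = 0 :=
    hroot.geom_sum_eq_zero (by omega)
  have key : ∑ l ∈ Finset.range N, Complex.exp (((2 * π * l / N + x : ℝ) : ℂ) * Complex.I) = 0 := by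
    have : ∀ l ∈ Finset.range N,
        Complex.exp (((2 * π * l / N + x : ℝ) : ℂ) * Complex.I)
          = Complex.exp ((x:ℝ) * Complex.I) * Complex.exp (2 * ↑π * Complex.I / ↑N) ^ l := by
      intro l _
      rw [← Complex.exp_nat_mul, ← Complex.exp_add]
      congr 1
      push_cast
      ring
    rw [Finset.sum_congr rfl this, ← Finset.mul_sum, hsum, mul_zero]
  have := congrArg Complex.re key
  rw [Complex.re_sum] at this
  simp only [Complex.exp_ofReal_mul_I_re] at this
  exact this

lemma sum_sin_sq (N : ℕ) (hN : 2 ≤ N) (y : ℝ) :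
    ∑ l ∈ Finset.range N, Real.sin (l * π / N + y) ^ 2 = N / 2 := by
  have h := sum_cos_zero N hN (2 * y)
  have step : ∀ l ∈ Finset.range N,
      Real.sin ((l:ℝ) * π / N + y) ^ 2 = 1/2 - Real.cos (2 * π * l / N + 2 * y) / 2 := by
    intro l _
    rw [show 2 * π * (l:ℝ) / N + 2 * y = 2 * ((l:ℝ) * π / N + y) by ring,
      Real.cos_two_mul, Real.sin_sq]
    ring
  rw [Finset.sum_congr rfl step, Finset.sum_sub_distrib, Finset.sum_const,
    ← Finset.sum_div, h, Finset.card_range]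
  simp
  ring

lemma sin_sq_sub_sin_sq (x y : ℝ) :
    Real.sin x ^ 2 - Real.sin y ^ 2 = Real.sin (x - y) * Real.sin (x + y) := by
  rw [Real.sin_add, Real.sin_sub]
  have hx := Real.sin_sq_add_cos_sq x
  have hy := Real.sin_sq_add_cos_sq y
  nlinarith [hx, hy]

lemma sin_ne_zero_of_grid (T : ℕ) (τ : ℝ)
    (hgrid : ∀ m : ℤ, (2 : ℝ) ^ T * τ / π ≠ m) (k : ℤ) :
    Real.sin (τ + k * π / 2 ^ T) ≠ 0 := by
  intro h
  rw [Real.sin_eq_zero_iff] at h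
  obtain ⟨n, hn⟩ := h
  apply hgrid (n * 2 ^ T - k)
  have hπ := Real.pi_ne_zero
  have h2 : ((2:ℝ) ^ T) ≠ 0 := by positivity
  push_cast
  field_simp at hn ⊢
  linarith [hn]

/-- The exact QAE outcome distribution with `T` precision qubits at phase `τ`. -/
noncomputable def qaePMF (T : ℕ) (τ : ℝ) (l : ℕ) : ℝ :=
  Real.sin ((2 : ℝ) ^ T * τ) ^ 2 / 2 ^ (2 * T + 1)
    * (1 / Real.sin (τ - l * π / 2 ^ T) ^ 2 + 1 / Real.sin (τ + l * π / 2 ^ T) ^ 2)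

/-- Closed-form MSE of the QAE estimator and its uniform bound:
`E[(sin²(πY/2^T) − sin²τ)²] = 2^(−(T+1)) sin²(2^T τ) ≤ 2^(−(T+1))`. -/
theorem qae_mse_closed_form_and_bound (T : ℕ) (hT : 1 ≤ T) (τ : ℝ)
    (hτ : τ ∈ Set.Ioo 0 (π / 2)) (hgrid : ∀ m : ℤ, (2 : ℝ) ^ T * τ / π ≠ m) :
    (∑ l ∈ Finset.range (2 ^ T),
        qaePMF T τ l * (Real.sin (π * l / 2 ^ T) ^ 2 - Real.sin τ ^ 2) ^ 2)
        = ((2 : ℝ) ^ (T + 1))⁻¹ * Real.sin ((2 : ℝ) ^ T * τ) ^ 2 ∧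
    (∑ l ∈ Finset.range (2 ^ T),
        qaePMF T τ l * (Real.sin (π * l / 2 ^ T) ^ 2 - Real.sin τ ^ 2) ^ 2)
        ≤ ((2 : ℝ) ^ (T + 1))⁻¹ := by
  have key : ∀ l ∈ Finset.range (2 ^ T),
      qaePMF T τ l * (Real.sin (π * l / 2 ^ T) ^ 2 - Real.sin τ ^ 2) ^ 2
      = Real.sin ((2:ℝ) ^ T * τ) ^ 2 / 2 ^ (2 * T + 1) *
        (Real.sin ((l:ℝ) * π / 2 ^ T + τ) ^ 2 + Real.sin ((l:ℝ) * π / 2 ^ T + (-τ)) ^ 2) := by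
    intro l _
    have ha : Real.sin (τ - (l:ℝ) * π / 2 ^ T) ≠ 0 := by
      have h := sin_ne_zero_of_grid T τ hgrid (-(l:ℤ))
      push_cast at h
      rw [show τ - (l:ℝ) * π / 2 ^ T = τ + -(l:ℝ) * π / 2 ^ T by ring]
      exact h
    have hb : Real.sin (τ + (l:ℝ) * π / 2 ^ T) ≠ 0 := by
      have h := sin_ne_zero_of_grid T τ hgrid (l:ℤ)
      push_cast at h
      exact h
    have hθ : Real.sin (π * (l:ℝ) / 2 ^ T) = Real.sin ((l:ℝ) * π / 2 ^ T) := by ring_nf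
    have herr := sin_sq_sub_sin_sq ((l:ℝ) * π / 2 ^ T) τ
    have h1 : Real.sin ((l:ℝ) * π / 2 ^ T - τ) = - Real.sin (τ - (l:ℝ) * π / 2 ^ T) := by
      rw [← Real.sin_neg]; ring_nf
    have h2 : Real.sin ((l:ℝ) * π / 2 ^ T + τ) = Real.sin (τ + (l:ℝ) * π / 2 ^ T) := by
      rw [add_comm]
    have h3 : Real.sin ((l:ℝ) * π / 2 ^ T + (-τ)) ^ 2
        = Real.sin (τ - (l:ℝ) * π / 2 ^ T) ^ 2 := by
      rw [show (l:ℝ) * π / 2 ^ T + (-τ) = -(τ - (l:ℝ) * π / 2 ^ T) by ring, Real.sin_neg]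
      ring
    rw [qaePMF, hθ, herr, h1, h2, h3]
    set a := Real.sin (τ - (l:ℝ) * π / 2 ^ T) with hA
    set b := Real.sin (τ + (l:ℝ) * π / 2 ^ T) with hB
    field_simp
  have hN : 2 ≤ 2 ^ T := by
    calc 2 = 2 ^ 1 := by norm_num
    _ ≤ 2 ^ T := Nat.pow_le_pow_right (by norm_num) hT
  have hs1 := sum_sin_sq (2 ^ T) hN τ
  have hs2 := sum_sin_sq (2 ^ T) hN (-τ)
  push_cast at hs1 hs2
  have heq : (∑ l ∈ Finset.range (2 ^ T),
      qaePMF T τ l * (Real.sin (π * l / 2 ^ T) ^ 2 - Real.sin τ ^ 2) ^ 2)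
      = ((2 : ℝ) ^ (T + 1))⁻¹ * Real.sin ((2 : ℝ) ^ T * τ) ^ 2 := by
    rw [Finset.sum_congr rfl key, ← Finset.mul_sum, Finset.sum_add_distrib, hs1, hs2]
    rw [show 2 * T + 1 = T + (T + 1) by ring, pow_add]
    have h2T : ((2:ℝ) ^ T) ≠ 0 := by positivity
    have h2T1 : ((2:ℝ) ^ (T+1)) ≠ 0 := by positivity
    field_simp
    ring
  refine ⟨heq, ?_⟩
  rw [heq]
  calc ((2 : ℝ) ^ (T + 1))⁻¹ * Real.sin ((2 : ℝ) ^ T * τ) ^ 2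
      ≤ ((2 : ℝ) ^ (T + 1))⁻¹ * 1 :=
        mul_le_mul_of_nonneg_left (Real.sin_sq_le_one _) (by positivity)
    _ = ((2 : ℝ) ^ (T + 1))⁻¹ := mul_one _
end

section
/- Let T ≥ 1 and τ ∈ (0, π/2) with 2^T·τ/π ∉ ℤ, let M ≥ 1, and let Y₁, …, Y_M be independent random variables each distributed according to the QAE outcome distribution P_τ on {0,…,2^T−1}. Set ρ = 32(π² − 8)/π⁴. Then the probability that at least M/2 of the runs fail, i.e. Pr( #{ m : |sin²(π·Y_m/2^T) − sin²τ| > π/2^T } ≥ M/2 ) ≤ ρ^(M/2). In particular, the median-of-M estimator H^(M) = median(sin²(π·Y₁/2^T), …, sin²(π·Y_M/2^T)) satisfies Pr( |H^(M) − sin²τ| > π/2^T ) ≤ ρ^(M/2). -/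
open Real

section helpers

lemma abs_sin_le_abs' (x : ℝ) : |Real.sin x| ≤ |x| := Real.abs_sin_le_abs

lemma sin_sq_le_sq' (x : ℝ) : Real.sin x ^ 2 ≤ x ^ 2 := Real.sin_sq_le_sq

lemma abs_sin_le_one' (x : ℝ) : |Real.sin x| ≤ 1 :=
  abs_le.2 ⟨Real.neg_one_le_sin x, Real.sin_le_one x⟩

end helpers

lemma poly_aux (u a : ℝ) (hu0 : 0 ≤ u) (hu : u ≤ 1/16) (ha1 : 4.93 ≤ a) (ha2 : a ≤ 4.94) :
    (1-4*u)^2 ≤ (1-a*u)^2*(1+4*u) := by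
  have hneg : a^2-8*a-16 ≤ 0 := by nlinarith
  have hmon : (a^2-8*a-16)*(1/16) ≤ (a^2-8*a-16)*u := by
    rcases eq_or_lt_of_le hneg with h | h
    · nlinarith
    · nlinarith [mul_le_mul_of_nonpos_left hu hneg]
  have hquad : 0 ≤ a^2 - 40*a + 176 := by nlinarith [mul_nonneg (sub_nonneg.2 ha1) (sub_nonneg.2 ha2)]
  have hq : 0 ≤ (12-2*a) + (a^2-8*a-16)*u + 4*a^2*u^2 := by
    nlinarith [mul_nonneg (mul_nonneg hu0 hu0) (sq_nonneg a)]
  nlinarith [mul_nonneg hu0 hq]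

lemma g_half (δ : ℝ) (h0 : 0 < δ) (h2 : δ ≤ 1/2) :
    8 ≤ sin (π*δ)^2 * (1/δ^2 + 1/(1-δ)^2) := by
  have h1δ : (0:ℝ) < 1 - δ := by linarith
  have hd2 : (0:ℝ) < δ^2 := by positivity
  rcases le_or_gt δ (1/4) with hc | hc
  · have hcon := strictConcaveOn_sin_Icc.concaveOn.2
      (show (0:ℝ) ∈ Set.Icc 0 π from ⟨le_rfl, pi_pos.le⟩)
      (show π/4 ∈ Set.Icc 0 π from ⟨by positivity, by linarith [pi_pos]⟩)
      (show (0:ℝ) ≤ 1 - 4*δ by linarith) (show (0:ℝ) ≤ 4*δ by linarith) (by ring)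
    simp only [smul_eq_mul, mul_zero, Real.sin_zero, Real.sin_pi_div_four, zero_add] at hcon
    rw [show 4*δ*(π/4) = π*δ by ring] at hcon
    have hcnn : 0 ≤ 4*δ*(Real.sqrt 2/2) := by positivity
    have hs2 : (4*δ*(Real.sqrt 2/2))^2 ≤ sin (π*δ)^2 := pow_le_pow_left₀ hcnn hcon 2
    have he : (4*δ*(Real.sqrt 2/2))^2 = 8*δ^2 := by
      rw [mul_pow, mul_pow, div_pow, Real.sq_sqrt (by norm_num : (0:ℝ) ≤ 2)]; ring
    have hsq : 8 * δ^2 ≤ sin (π*δ)^2 := by rw [he] at hs2; exact hs2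
    have h1 : 8 ≤ sin (π*δ)^2 * (1/δ^2) := by
      rw [mul_one_div, le_div_iff₀ hd2]; linarith
    have h2' : 0 ≤ sin (π*δ)^2 * (1/(1-δ)^2) := by positivity
    nlinarith
  · set t := 1/2 - δ with htdef
    have ht0 : 0 ≤ t := by simp only [htdef]; linarith
    have ht4 : t ≤ 1/4 := by simp only [htdef]; linarith
    have hsc : sin (π*δ) = cos (π*t) := by
      rw [show π*δ = π/2 - π*t by rw [htdef]; ring, Real.sin_pi_div_two_sub]
    have hL : 1 - (π*t)^2/2 ≤ cos (π*t) := Real.one_sub_sq_div_two_le_cos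
    have hπ1 : (3.1415:ℝ) < π := by linarith [Real.pi_gt_d6]
    have hπ2 : π < 3.1416 := by linarith [Real.pi_lt_d6]
    have hπ0 : (0:ℝ) < π := pi_pos
    have hsqπ : π^2 < 9.87 := by nlinarith [mul_lt_mul'' hπ2 hπ2 hπ0.le hπ0.le]
    have hsqπ' : (9.869:ℝ) < π^2 := by nlinarith [mul_lt_mul'' hπ1 hπ1 (by norm_num : (0:ℝ) ≤ 3.1415) (by norm_num : (0:ℝ) ≤ 3.1415)]
    have ha1 : (4.93:ℝ) ≤ π^2/2 := by linarith
    have ha2 : π^2/2 ≤ 4.94 := by linarith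
    have hu0 : (0:ℝ) ≤ t^2 := sq_nonneg t
    have hu : t^2 ≤ 1/16 := by nlinarith
    have hL0 : 0 ≤ 1 - (π*t)^2/2 := by nlinarith
    have hc2 : (1 - (π*t)^2/2)^2 ≤ cos (π*t)^2 := pow_le_pow_left₀ hL0 hL 2
    have hpoly := poly_aux (t^2) (π^2/2) hu0 hu ha1 ha2
    have hLrw : (1 - (π*t)^2/2)^2 = (1 - (π^2/2)*t^2)^2 := by ring
    rw [hLrw] at hc2
    have key : 8*(δ*(1-δ))^2 ≤ cos (π*t)^2 * (δ^2+(1-δ)^2) := by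
      have e1 : δ*(1-δ) = 1/4 - t^2 := by rw [htdef]; ring
      have e2 : δ^2+(1-δ)^2 = 1/2 + 2*t^2 := by rw [htdef]; ring
      rw [e1, e2]
      have m1 : (1-(π^2/2)*t^2)^2*(1+4*t^2) ≤ cos (π*t)^2*(1+4*t^2) :=
        mul_le_mul_of_nonneg_right hc2 (by positivity)
      have e3 : cos (π*t)^2*(1/2+2*t^2) = cos (π*t)^2*(1+4*t^2)/2 := by ring
      have e4 : 8*(1/4-t^2)^2 = (1-4*t^2)^2/2 := by ring
      linarith
    have hrw : 1/δ^2 + 1/(1-δ)^2 = (δ^2+(1-δ)^2)/(δ*(1-δ))^2 := by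
      field_simp; ring
    rw [hsc, hrw, ← mul_div_assoc, le_div_iff₀ (by positivity)]
    linarith

lemma g_ge (δ : ℝ) (h0 : 0 < δ) (h1 : δ < 1) :
    8 ≤ sin (π*δ)^2 * (1/δ^2 + 1/(1-δ)^2) := by
  rcases le_or_gt δ (1/2) with h | h
  · exact g_half δ h0 h
  · have h3 := g_half (1-δ) (by linarith) (by linarith)
    have hs : sin (π*(1-δ)) = sin (π*δ) := by
      rw [show π*(1-δ) = π - π*δ by ring, Real.sin_pi_sub]
    rw [hs] at h3
    calc (8:ℝ) ≤ sin (π*δ)^2 * (1/(1-δ)^2 + 1/(1-(1-δ))^2) := h3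
      _ = sin (π*δ)^2 * (1/δ^2 + 1/(1-δ)^2) := by ring_nf

lemma sin_sq_sub_sin_sq_s16 (a b : ℝ) : sin a ^2 - sin b ^2 = sin (a+b) * sin (a-b) := by
  rw [Real.sin_add, Real.sin_sub]
  linear_combination (Real.sin b)^2 * (Real.sin_sq_add_cos_sq a) - (Real.sin a)^2 * (Real.sin_sq_add_cos_sq b)

lemma csc_pair (y : ℝ) (h : sin (2*y) ≠ 0) : 1/sin y ^2 + 1/cos y ^2 = 4 / sin (2*y)^2 := by
  have h2 : sin (2*y) = 2 * sin y * cos y := Real.sin_two_mul y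
  have hs : sin y ≠ 0 := fun hs => h (by rw [h2, hs]; ring)
  have hc : cos y ≠ 0 := fun hc => h (by rw [h2, hc]; ring)
  rw [h2]
  field_simp
  linear_combination 4 * Real.sin_sq_add_cos_sq y

lemma csc_sum : ∀ (T : ℕ) (x : ℝ), (∀ m : ℤ, (2:ℝ)^T * x / π ≠ m) →
    ∑ l ∈ Finset.range (2^T), 1 / sin (x + l * π / 2^T) ^ 2 = 4^T / sin ((2:ℝ)^T * x) ^ 2 := by
  intro T
  induction T with
  | zero => intro x _; simp
  | succ T ih =>
    intro x hx
    have hπ : (π:ℝ) ≠ 0 := Real.pi_ne_zero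
    have h2T : ((2:ℝ)^(T+1)) ≠ 0 := by positivity
    have hpow : (2:ℕ)^(T+1) = 2^T + 2^T := by ring
    rw [hpow, Finset.sum_range_add]
    have hpair : ∀ l ∈ Finset.range (2^T),
        1 / sin (x + l * π / 2^(T+1)) ^ 2 + 1 / sin (x + ((2:ℝ)^T + l) * π / 2^(T+1)) ^ 2
        = 4 * (1 / sin (2*x + l * π / 2^T) ^ 2) := by
      intro l hl
      have harg2 : x + ((2:ℝ)^T + l) * π / 2^(T+1) = (x + l * π / 2^(T+1)) + π/2 := by
        field_simp; ring
      have hdouble : 2 * (x + l * π / 2^(T+1)) = 2*x + l * π / 2^T := by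
        field_simp; ring
      have hne : sin (2 * (x + l * π / 2^(T+1))) ≠ 0 := by
        rw [hdouble]
        intro h0
        rcases Real.sin_eq_zero_iff.1 h0 with ⟨n, hn⟩
        apply hx (2^T * n - l)
        push_cast
        rw [div_eq_iff hπ]
        have he : (2:ℝ)^(T+1) * x = 2^T * (2*x + l*π/2^T) - l * π := by
          field_simp; ring
        rw [he, ← hn]
        ring
      have hcp := csc_pair (x + l * π / 2^(T+1)) hne
      rw [harg2, Real.sin_add_pi_div_two, hcp, hdouble]
      ring
    have h2x : ∀ m : ℤ, (2:ℝ)^T * (2*x) / π ≠ m := fun m hm => hx m (by rw [← hm]; ring)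
    push_cast
    rw [← Finset.sum_add_distrib, Finset.sum_congr rfl hpair, ← Finset.mul_sum, ih (2*x) h2x,
      show (2:ℝ)^T*(2*x) = 2^(T+1)*x by ring]
    rw [pow_succ]
    ring

lemma chernoff {N M : ℕ} (hM : 1 ≤ M) (P : Fin N → ℝ) (hP : ∀ l, 0 ≤ P l)
    (b : Fin N → Prop) [DecidablePred b]
    (hsum : ∑ l, P l = 1) (p : ℝ) (hp2 : 1/2 ≤ p)
    (hgood : p ≤ ∑ l ∈ Finset.univ.filter (fun l => ¬ b l), P l) :
    ∑ y : Fin M → Fin N,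
      (if (M:ℝ)/2 ≤ (Finset.univ.filter (fun m : Fin M => b (y m))).card
       then ∏ m, P (y m) else 0) ≤ (4*p*(1-p)) ^ ((M:ℝ)/2) := by
  set q := ∑ l ∈ Finset.univ.filter (fun l => b l), P l with hqdef
  set p' := ∑ l ∈ Finset.univ.filter (fun l => ¬ b l), P l with hp'def
  have hqp : q + p' = 1 := by
    rw [hqdef, hp'def, Finset.sum_filter_add_sum_filter_not, hsum]
  have hq0 : 0 ≤ q := Finset.sum_nonneg fun l _ => hP l
  have hp'1 : p' ≤ 1 := by linarith
  have hp'pos : (0:ℝ) < p' := by linarith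
  have hq12 : q ≤ 1/2 := by linarith
  have hp1 : p ≤ 1 := le_trans hgood hp'1
  have hbase : (0:ℝ) ≤ 4*p*(1-p) := by nlinarith
  rcases eq_or_lt_of_le hq0 with hq | hq
  · -- q = 0
    have hzero : ∀ l ∈ Finset.univ.filter (fun l => b l), P l = 0 := by
      intro l hl
      exact ((Finset.sum_eq_zero_iff_of_nonneg (fun l _ => hP l)).1 hq.symm) l hl
    have : ∑ y : Fin M → Fin N,
      (if (M:ℝ)/2 ≤ (Finset.univ.filter (fun m : Fin M => b (y m))).card
       then ∏ m, P (y m) else 0) = 0 := by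
      apply Finset.sum_eq_zero
      intro y _
      split_ifs with h
      · have hMpos : (0:ℝ) < (M:ℝ)/2 := by
          have : (1:ℝ) ≤ M := by exact_mod_cast hM
          linarith
        have hcard : 0 < (Finset.univ.filter (fun m : Fin M => b (y m))).card := by
          by_contra hc
          push_neg at hc
          interval_cases h' : (Finset.univ.filter (fun m : Fin M => b (y m))).card
          · simp [h'] at h; linarith
        obtain ⟨m0, hm0⟩ := Finset.card_pos.1 hcard
        have hb0 : b (y m0) := (Finset.mem_filter.1 hm0).2
        apply Finset.prod_eq_zero (Finset.mem_univ m0)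
        exact hzero (y m0) (Finset.mem_filter.2 ⟨Finset.mem_univ _, hb0⟩)
      · rfl
    rw [this]
    exact Real.rpow_nonneg hbase _
  · -- q > 0
    set r := p'/q with hrdef
    have hr0 : (0:ℝ) < r := div_pos hp'pos hq
    have hr1 : 1 ≤ r := (one_le_div hq).2 (by linarith)
    have step1 : ∑ y : Fin M → Fin N,
        (if (M:ℝ)/2 ≤ (Finset.univ.filter (fun m : Fin M => b (y m))).card
         then ∏ m, P (y m) else 0)
        ≤ ∑ y : Fin M → Fin N,
            r ^ (-((M:ℝ)/2)) * ∏ m, (P (y m) * (if b (y m) then r else 1)) := by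
      apply Finset.sum_le_sum
      intro y _
      have hprodP : (0:ℝ) ≤ ∏ m, P (y m) := Finset.prod_nonneg fun m _ => hP (y m)
      have hsplit : ∏ m, (P (y m) * (if b (y m) then r else 1))
          = (∏ m, P (y m)) * r ^ (Finset.univ.filter (fun m : Fin M => b (y m))).card := by
        rw [Finset.prod_mul_distrib]
        congr 1
        rw [← Finset.prod_filter, Finset.prod_const]
      split_ifs with h
      · rw [hsplit, ← mul_assoc, mul_comm (r ^ (-((M:ℝ)/2))), mul_assoc]
        set k := (Finset.univ.filter (fun m : Fin M => b (y m))).card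
        have hone : 1 ≤ r ^ (-((M:ℝ)/2)) * r ^ k := by
          rw [← Real.rpow_natCast r k, ← Real.rpow_add hr0]
          calc (1:ℝ) = r ^ (0:ℝ) := (Real.rpow_zero r).symm
            _ ≤ r ^ (-((M:ℝ)/2) + k) := by
                apply Real.rpow_le_rpow_of_exponent_le hr1
                linarith
        nlinarith
      · apply mul_nonneg (Real.rpow_nonneg hr0.le _)
        apply Finset.prod_nonneg
        intro m _
        apply mul_nonneg (hP _)
        split_ifs <;> linarith
    have step2 : ∑ y : Fin M → Fin N, ∏ m, (P (y m) * (if b (y m) then r else 1))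
        = (2*p')^M := by
      have hps := Finset.prod_univ_sum (fun _ : Fin M => (Finset.univ : Finset (Fin N)))
        (fun _ l => P l * (if b l then r else 1))
      rw [Fintype.piFinset_univ] at hps
      rw [← hps]
      have hinner : ∀ m : Fin M, ∑ l : Fin N, (P l * (if b l then r else 1)) = 2*p' := by
        intro m
        have he : ∀ l : Fin N, P l * (if b l then r else 1) = if b l then P l * r else P l := by
          intro l; split_ifs <;> ring
        simp_rw [he]
        rw [Finset.sum_ite, ← Finset.sum_mul, ← hqdef, ← hp'def, hrdef]
        field_simp
        linarith
      rw [Finset.prod_congr rfl (fun m _ => hinner m), Finset.prod_const, Finset.card_univ,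
        Fintype.card_fin]
    have step3 : (∑ y : Fin M → Fin N,
        r ^ (-((M:ℝ)/2)) * ∏ m, (P (y m) * (if b (y m) then r else 1)))
        = r ^ (-((M:ℝ)/2)) * (2*p')^M := by
      rw [← Finset.mul_sum, step2]
    have hfin : r ^ (-((M:ℝ)/2)) * (2*p')^M ≤ (4*p*(1-p)) ^ ((M:ℝ)/2) := by
      have h2p' : (0:ℝ) ≤ 2*p' := by linarith
      have e1 : ((2*p')^M : ℝ) = ((2*p')^2) ^ ((M:ℝ)/2) := by
        rw [← Real.rpow_natCast (2*p') M, ← Real.rpow_natCast (2*p') 2,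
          ← Real.rpow_mul h2p']
        congr 1
        push_cast
        ring
      have e2 : r ^ (-((M:ℝ)/2)) = (q/p') ^ ((M:ℝ)/2) := by
        rw [Real.rpow_neg hr0.le, ← Real.inv_rpow hr0.le]
        congr 1
        rw [hrdef]
        field_simp
      rw [e1, e2, ← Real.mul_rpow (by positivity) (by positivity)]
      apply Real.rpow_le_rpow (by positivity) _ (by positivity)
      have e3 : q/p' * (2*p')^2 = 4*q*p' := by field_simp; ring
      rw [e3]
      nlinarith [mul_nonneg (sub_nonneg.2 hgood) (show (0:ℝ) ≤ p' + p - 1 by linarith)]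
    calc _ ≤ _ := step1
      _ = _ := step3
      _ ≤ _ := hfin

lemma heq_aux (S R d p : ℝ) (hR : R ≠ 0) (hd : d ≠ 0) (hd1 : 1 - d ≠ 0) (hp : p ≠ 0) :
    (S/(R*2)) * (2*(R/(d^2*p^2)) + 2*(R/((1-d)^2*p^2))) = (S * (1/d^2 + 1/(1-d)^2))/p^2 := by
  field_simp

set_option maxHeartbeats 2000000 in
/-- Median-of-`M` error bound for QBOOT. With `M` i.i.d. QAE outcomes
`Y₁,…,Y_M ~ P_τ` (modelled by the product distribution over `y : Fin M → Fin (2^T)`),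
and `ρ = 32(π² − 8)/π⁴`: the probability that at least `M/2` runs fail (error `> π/2^T`)
is at most `ρ^(M/2)`; in particular any median `med` of the `M` estimates satisfies
`Pr(|med − sin²τ| > π/2^T) ≤ ρ^(M/2)`. -/
theorem qboot_median_of_M_bound (T : ℕ) (hT : 1 ≤ T) (τ : ℝ)
    (hτ : τ ∈ Set.Ioo 0 (π / 2)) (hgrid : ∀ m : ℤ, (2 : ℝ) ^ T * τ / π ≠ m)
    (M : ℕ) (hM : 1 ≤ M)
    (med : (Fin M → ℝ) → ℝ)
    (hmed : ∀ v : Fin M → ℝ,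
      (M : ℝ) / 2 ≤ (Finset.univ.filter (fun m : Fin M => v m ≤ med v)).card ∧
      (M : ℝ) / 2 ≤ (Finset.univ.filter (fun m : Fin M => med v ≤ v m)).card) :
    let ρ : ℝ := 32 * (π ^ 2 - 8) / π ^ 4
    let est : Fin (2 ^ T) → ℝ := fun l => Real.sin (π * (l : ℕ) / 2 ^ T) ^ 2
    let fail : ℝ → Prop := fun e => |e - Real.sin τ ^ 2| > π / 2 ^ T
    (∑ y : Fin M → Fin (2 ^ T),
        (if (M : ℝ) / 2 ≤ (Finset.univ.filter (fun m : Fin M => fail (est (y m)))).card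
         then ∏ m : Fin M, qaePMF T τ (y m) else 0))
      ≤ ρ ^ ((M : ℝ) / 2) ∧
    (∑ y : Fin M → Fin (2 ^ T),
        (if fail (med (fun m => est (y m)))
         then ∏ m : Fin M, qaePMF T τ (y m) else 0))
      ≤ ρ ^ ((M : ℝ) / 2) := by
  intro ρ est fail
  obtain ⟨hτ0, hτπ⟩ := hτ
  have hπ0 : (0:ℝ) < π := pi_pos
  have h2T0 : (0:ℝ) < (2:ℝ)^T := by positivity
  have hπ2 : π < 3.1416 := by linarith [Real.pi_lt_d6]
  have hπ1 : (3.1415:ℝ) < π := by linarith [Real.pi_gt_d6]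
  -- probabilities are nonnegative
  have hP : ∀ l : Fin (2^T), 0 ≤ qaePMF T τ (l : ℕ) := by
    intro l; unfold qaePMF; positivity
  -- the pmf sums to one
  have hsinN : Real.sin ((2:ℝ)^T * τ) ≠ 0 := by
    intro h0
    rcases Real.sin_eq_zero_iff.1 h0 with ⟨n, hn⟩
    exact hgrid n (by rw [← hn]; field_simp)
  have hgrid' : ∀ m : ℤ, (2:ℝ)^T * (-τ) / π ≠ m := by
    intro m hm
    apply hgrid (-m)
    have he : (2:ℝ)^T * (-τ) / π = -((2:ℝ)^T * τ / π) := by ring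
    push_cast
    rw [he] at hm
    linarith [hm.symm.le]
  have hplus := csc_sum T τ hgrid
  have hminus := csc_sum T (-τ) hgrid'
  have h4T : (4:ℝ)^T = 2^T * 2^T := by
    rw [show (4:ℝ) = 2*2 by norm_num, mul_pow]
  have h2T1 : (2:ℝ)^(2*T+1) = 4^T * 2 := by
    rw [pow_add, pow_mul]; norm_num
  have hsum : ∑ l : Fin (2^T), qaePMF T τ (l : ℕ) = 1 := by
    rw [Fin.sum_univ_eq_sum_range (fun l => qaePMF T τ l) (2^T)]
    unfold qaePMF
    rw [← Finset.mul_sum, Finset.sum_add_distrib]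
    have hmeq : ∑ l ∈ Finset.range (2^T), 1/Real.sin (τ - l*π/2^T)^2
        = ∑ l ∈ Finset.range (2^T), 1/Real.sin (-τ + l*π/2^T)^2 := by
      apply Finset.sum_congr rfl; intro l _
      rw [show τ - l*π/2^T = -(-τ + l*π/2^T) by ring, Real.sin_neg]
      ring
    rw [hmeq, hminus, hplus,
      show (2:ℝ)^T * (-τ) = -((2:ℝ)^T*τ) by ring, Real.sin_neg, h2T1]
    have hs2 : Real.sin ((2:ℝ)^T*τ)^2 ≠ 0 := pow_ne_zero 2 hsinN
    field_simp
    ring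
  -- setup for the good-outcome mass
  set a : ℝ := (2:ℝ)^T * τ / π with hadef
  have hτa : τ = a * π / 2^T := by rw [hadef]; field_simp
  have ha0 : 0 < a := by rw [hadef]; positivity
  set m : ℕ := ⌊a⌋₊ with hmdef
  set δ : ℝ := a - m with hδdef
  have hma : (m:ℝ) ≤ a := Nat.floor_le ha0.le
  have ham : a < m + 1 := Nat.lt_floor_add_one a
  have hδ0 : 0 < δ := by
    rw [hδdef]
    rcases lt_or_eq_of_le hma with h | h
    · linarith
    · exact absurd h.symm (by exact_mod_cast hgrid (m : ℤ))
  have hδ1 : δ < 1 := by rw [hδdef]; linarith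
  have haN : a < 2^T/2 := by
    rw [hadef, div_lt_iff₀ hπ0]
    have h := mul_lt_mul_of_pos_left hτπ h2T0
    linarith only [h]
  have hN2 : 2 ≤ 2^T := by
    calc 2 = 2^1 := rfl
      _ ≤ 2^T := Nat.pow_le_pow_right (by norm_num) hT
  have h2m : 2*m < 2^T := by
    have : (2*m : ℝ) < 2^T := by
      push_cast
      calc 2*(m:ℝ) ≤ 2*a := by linarith
        _ < 2^T := by linarith
    exact_mod_cast this
  have hm1N : m + 1 < 2^T := by omega
  have hmN : m < 2^T := by omega
  have h2TR : (2:ℝ) ≤ (2:ℝ)^T := by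
    have : ((2^T : ℕ) : ℝ) = (2:ℝ)^T := by push_cast; ring
    rw [← this]
    exact_mod_cast hN2
  -- the four good outcomes
  set l2 : ℕ := if m = 0 then 0 else 2^T - m with hl2def
  have hl2N : l2 < 2^T := by rw [hl2def]; split_ifs <;> omega
  have hg3N : 2^T - m - 1 < 2^T := by omega
  have hcastNm : ((2^T - m : ℕ) : ℝ) = (2:ℝ)^T - m := by
    rw [Nat.cast_sub hmN.le]; push_cast; ring
  have hcastNm1 : ((2^T - m - 1 : ℕ) : ℝ) = (2:ℝ)^T - m - 1 := by
    rw [Nat.cast_sub (by omega), Nat.cast_sub hmN.le]; push_cast; ring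
  -- argument identities
  have h2Tne : ((2:ℝ)^T) ≠ 0 := ne_of_gt h2T0
  have e0 : τ - (m:ℝ)*π/2^T = δ*(π/2^T) := by
    rw [hδdef, hτa]; field_simp
  have e1 : τ - ((m:ℝ)+1)*π/2^T = -((1-δ)*(π/2^T)) := by
    rw [hδdef, hτa]; field_simp; ring
  have e3 : τ + ((2^T - m - 1 : ℕ):ℝ)*π/2^T = π - (1-δ)*(π/2^T) := by
    rw [hcastNm1, hδdef, hτa]; field_simp; ring
  -- positivity of the relevant sines
  have hp2T : (0:ℝ) < π/2^T := by positivity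
  have hp2Tπ : π/2^T ≤ π := div_le_self hπ0.le (by linarith)
  have hδle : δ*(π/2^T) ≤ π/2^T := by
    have h := mul_le_mul_of_nonneg_right hδ1.le hp2T.le
    linarith only [h]
  have h1δle : (1-δ)*(π/2^T) ≤ π/2^T := by
    have h := mul_le_mul_of_nonneg_right (show 1-δ ≤ 1 by linarith only [hδ0]) hp2T.le
    linarith only [h]
  have hδarg : δ*(π/2^T) < π := by
    have h := mul_lt_mul_of_pos_right hδ1 hp2T
    linarith only [h, hp2Tπ]
  have h1δarg : (1-δ)*(π/2^T) < π := by
    have h := mul_lt_mul_of_pos_right (show 1-δ < 1 by linarith only [hδ0]) hp2T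
    linarith only [h, hp2Tπ]
  have hsinδpos : 0 < Real.sin (δ*(π/2^T)) :=
    Real.sin_pos_of_pos_of_lt_pi (mul_pos hδ0 hp2T) hδarg
  have hsin1δpos : 0 < Real.sin ((1-δ)*(π/2^T)) :=
    Real.sin_pos_of_pos_of_lt_pi (mul_pos (by linarith) hp2T) h1δarg
  -- fail is equivalent to a bound
  have good_of_bound : ∀ l : Fin (2^T),
      (|Real.sin (π*((l:ℕ):ℝ)/2^T + τ)| ≤ π/2^T ∨ |Real.sin (π*((l:ℕ):ℝ)/2^T - τ)| ≤ π/2^T) →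
      ¬ fail (est l) := by
    intro l h
    show ¬ (π / 2^T < |Real.sin (π * ((l:ℕ):ℝ) / 2 ^ T) ^ 2 - Real.sin τ ^ 2|)
    rw [not_lt, sin_sq_sub_sin_sq_s16, abs_mul]
    rcases h with h | h
    · calc |Real.sin (π*((l:ℕ):ℝ)/2^T + τ)| * |Real.sin (π*((l:ℕ):ℝ)/2^T - τ)|
          ≤ (π/2^T) * 1 :=
            mul_le_mul h (abs_sin_le_one' _) (abs_nonneg _) (by positivity)
        _ = π/2^T := mul_one _
    · calc |Real.sin (π*((l:ℕ):ℝ)/2^T + τ)| * |Real.sin (π*((l:ℕ):ℝ)/2^T - τ)|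
          ≤ 1 * (π/2^T) :=
            mul_le_mul (abs_sin_le_one' _) h (abs_nonneg _) zero_le_one
        _ = π/2^T := (one_mul _)
  -- memberships
  have habs_δ : |Real.sin (δ*(π/2^T))| ≤ π/2^T := by
    refine le_trans (abs_sin_le_abs' _) ?_
    rw [abs_of_pos (mul_pos hδ0 hp2T)]
    exact hδle
  have habs_1δ : |Real.sin ((1-δ)*(π/2^T))| ≤ π/2^T := by
    refine le_trans (abs_sin_le_abs' _) ?_
    rw [abs_of_pos (mul_pos (by linarith) hp2T)]
    exact h1δle
  have hg0 : ¬ fail (est ⟨m, hmN⟩) := by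
    apply good_of_bound _ (Or.inr _)
    rw [show π*(((⟨m, hmN⟩ : Fin (2^T)):ℕ):ℝ)/2^T - τ = -(τ - (m:ℝ)*π/2^T) by
      simp only [Fin.val_mk]; ring, e0, Real.sin_neg, abs_neg]
    exact habs_δ
  have hg1 : ¬ fail (est ⟨m+1, hm1N⟩) := by
    apply good_of_bound _ (Or.inr _)
    rw [show π*(((⟨m+1, hm1N⟩ : Fin (2^T)):ℕ):ℝ)/2^T - τ = -(τ - ((m:ℝ)+1)*π/2^T) by
      simp only [Fin.val_mk]; push_cast; ring, e1, Real.sin_neg, abs_neg, Real.sin_neg, abs_neg]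
    exact habs_1δ
  have e2 : τ + (l2:ℝ)*π/2^T = δ*(π/2^T) ∨ τ + (l2:ℝ)*π/2^T = δ*(π/2^T) + π := by
    rcases Nat.eq_zero_or_pos m with hm0 | hm0
    · left
      rw [hl2def, if_pos hm0, hδdef, hm0, hτa]
      push_cast
      field_simp
      ring
    · right
      rw [hl2def, if_neg hm0.ne', hcastNm, hδdef, hτa]
      field_simp; ring
  have hg2 : ¬ fail (est ⟨l2, hl2N⟩) := by
    apply good_of_bound _ (Or.inl _)
    rw [show π*(((⟨l2, hl2N⟩ : Fin (2^T)):ℕ):ℝ)/2^T + τ = τ + (l2:ℝ)*π/2^T by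
      simp only [Fin.val_mk]; ring]
    rcases e2 with he | he
    · rw [he]; exact habs_δ
    · rw [he, show δ*(π/2^T) + π = δ*(π/2^T) + π from rfl, Real.sin_add_pi, abs_neg]
      exact habs_δ
  have hg3 : ¬ fail (est ⟨2^T - m - 1, hg3N⟩) := by
    apply good_of_bound _ (Or.inl _)
    rw [show π*(((⟨2^T - m - 1, hg3N⟩ : Fin (2^T)):ℕ):ℝ)/2^T + τ
        = τ + ((2^T - m - 1 : ℕ):ℝ)*π/2^T by simp only [Fin.val_mk]; ring,
      e3, Real.sin_pi_sub]
    exact habs_1δ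
  -- reciprocal square bounds
  have hsinδsq : (0:ℝ) < Real.sin (δ*(π/2^T))^2 := pow_pos hsinδpos 2
  have hsin1δsq : (0:ℝ) < Real.sin ((1-δ)*(π/2^T))^2 := pow_pos hsin1δpos 2
  have hbound1 : (4:ℝ)^T/(δ^2*π^2) = 1/((δ*(π/2^T))^2) := by
    rw [h4T]; field_simp
  have hbound2 : (4:ℝ)^T/((1-δ)^2*π^2) = 1/(((1-δ)*(π/2^T))^2) := by
    rw [h4T]; field_simp
  have hrec_δ : (4:ℝ)^T/(δ^2*π^2) ≤ 1/Real.sin (δ*(π/2^T))^2 := by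
    rw [hbound1]
    exact one_div_le_one_div_of_le hsinδsq (sin_sq_le_sq' _)
  have hrec_1δ : (4:ℝ)^T/((1-δ)^2*π^2) ≤ 1/Real.sin ((1-δ)*(π/2^T))^2 := by
    rw [hbound2]
    exact one_div_le_one_div_of_le hsin1δsq (sin_sq_le_sq' _)
  have hfA0 : (4:ℝ)^T/(δ^2*π^2)
      ≤ 1/Real.sin (τ - (((⟨m, hmN⟩ : Fin (2^T)):ℕ):ℝ)*π/2^T)^2 := by
    simp only [Fin.val_mk]
    rw [e0]; exact hrec_δ
  have hfA1 : (4:ℝ)^T/((1-δ)^2*π^2)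
      ≤ 1/Real.sin (τ - (((⟨m+1, hm1N⟩ : Fin (2^T)):ℕ):ℝ)*π/2^T)^2 := by
    simp only [Fin.val_mk]
    rw [show ((m+1:ℕ):ℝ) = (m:ℝ)+1 by push_cast; ring, e1, Real.sin_neg, neg_sq]
    exact hrec_1δ
  have hfB2 : (4:ℝ)^T/(δ^2*π^2)
      ≤ 1/Real.sin (τ + (((⟨l2, hl2N⟩ : Fin (2^T)):ℕ):ℝ)*π/2^T)^2 := by
    simp only [Fin.val_mk]
    rcases e2 with he | he
    · rw [he]; exact hrec_δ
    · rw [he, Real.sin_add_pi, neg_sq]; exact hrec_δ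
  have hfB3 : (4:ℝ)^T/((1-δ)^2*π^2)
      ≤ 1/Real.sin (τ + (((⟨2^T-m-1, hg3N⟩ : Fin (2^T)):ℕ):ℝ)*π/2^T)^2 := by
    simp only [Fin.val_mk]
    rw [e3, Real.sin_pi_sub]
    exact hrec_1δ
  have hne01 : (⟨m, hmN⟩ : Fin (2^T)) ≠ ⟨m+1, hm1N⟩ := by
    simp only [ne_eq, Fin.mk.injEq]; omega
  have hne23 : (⟨l2, hl2N⟩ : Fin (2^T)) ≠ ⟨2^T-m-1, hg3N⟩ := by
    simp only [ne_eq, Fin.mk.injEq]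
    rw [hl2def]; split_ifs <;> omega
  set Gd := Finset.univ.filter (fun l : Fin (2^T) => ¬ fail (est l)) with hGddef
  have hsub1 : ({⟨m, hmN⟩, ⟨m+1, hm1N⟩} : Finset (Fin (2^T))) ⊆ Gd := by
    rw [hGddef]
    intro x hx
    simp only [Finset.mem_insert, Finset.mem_singleton] at hx
    rcases hx with rfl | rfl
    · exact Finset.mem_filter.2 ⟨Finset.mem_univ _, hg0⟩
    · exact Finset.mem_filter.2 ⟨Finset.mem_univ _, hg1⟩
  have hsub2 : ({⟨l2, hl2N⟩, ⟨2^T-m-1, hg3N⟩} : Finset (Fin (2^T))) ⊆ Gd := by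
    rw [hGddef]
    intro x hx
    simp only [Finset.mem_insert, Finset.mem_singleton] at hx
    rcases hx with rfl | rfl
    · exact Finset.mem_filter.2 ⟨Finset.mem_univ _, hg2⟩
    · exact Finset.mem_filter.2 ⟨Finset.mem_univ _, hg3⟩
  have hApair := Finset.sum_le_sum_of_subset_of_nonneg (f := fun l : Fin (2^T) =>
    1/Real.sin (τ - ((l:ℕ):ℝ)*π/2^T)^2) hsub1 (fun l _ _ => by positivity)
  rw [Finset.sum_pair hne01] at hApair
  have hBpair := Finset.sum_le_sum_of_subset_of_nonneg (f := fun l : Fin (2^T) =>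
    1/Real.sin (τ + ((l:ℕ):ℝ)*π/2^T)^2) hsub2 (fun l _ _ => by positivity)
  rw [Finset.sum_pair hne23] at hBpair
  have hcval : Real.sin ((2:ℝ)^T*τ)^2 = Real.sin (π*δ)^2 := by
    have h1 : (2:ℝ)^T*τ = π*δ + ((m:ℤ):ℝ)*π := by
      rw [hδdef, hτa]; push_cast; field_simp; ring
    rw [h1, Real.sin_add_int_mul_pi, mul_pow]
    have h2 : ((-1:ℝ)^(m:ℤ))^2 = 1 := by
      rw [← zpow_natCast ((-1:ℝ)^(m:ℤ)) 2, ← zpow_mul, mul_comm, zpow_mul]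
      norm_num
    rw [h2, one_mul]
  have hgood : 8/π^2 ≤ ∑ l ∈ Gd, qaePMF T τ (l:ℕ) := by
    have hfactor : ∑ l ∈ Gd, qaePMF T τ (l:ℕ)
        = (Real.sin ((2:ℝ)^T*τ)^2/2^(2*T+1)) *
          ∑ l ∈ Gd, (1/Real.sin (τ - ((l:ℕ):ℝ)*π/2^T)^2 + 1/Real.sin (τ + ((l:ℕ):ℝ)*π/2^T)^2) := by
      rw [Finset.mul_sum]
      exact Finset.sum_congr rfl (fun l _ => rfl)
    rw [hfactor, Finset.sum_add_distrib]
    have hsum4 : 2*((4:ℝ)^T/(δ^2*π^2)) + 2*((4:ℝ)^T/((1-δ)^2*π^2))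
        ≤ (∑ l ∈ Gd, 1/Real.sin (τ - ((l:ℕ):ℝ)*π/2^T)^2)
          + (∑ l ∈ Gd, 1/Real.sin (τ + ((l:ℕ):ℝ)*π/2^T)^2) := by
      linarith only [hApair, hBpair, hfA0, hfA1, hfB2, hfB3]
    have hkey : 8/π^2 ≤ (Real.sin ((2:ℝ)^T*τ)^2/2^(2*T+1)) *
        (2*((4:ℝ)^T/(δ^2*π^2)) + 2*((4:ℝ)^T/((1-δ)^2*π^2))) := by
      rw [hcval, h2T1]
      have hg8 := g_ge δ hδ0 hδ1
      have heq := heq_aux (Real.sin (π*δ)^2) ((4:ℝ)^T) δ π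
        (by positivity) (ne_of_gt hδ0) (by linarith only [hδ1]) (ne_of_gt hπ0)
      rw [heq]
      exact (div_le_div_iff_of_pos_right (by positivity : (0:ℝ) < π^2)).2 hg8
    refine le_trans hkey (mul_le_mul_of_nonneg_left hsum4 (by positivity))
  -- apply the Chernoff-type bound
  have hπsq16 : π^2 < 16 := by
    have h := mul_lt_mul'' hπ2 hπ2 hπ0.le hπ0.le
    rw [sq]; linarith only [h]
  have hπsq8 : (8:ℝ) < π^2 := by
    have h := mul_lt_mul'' hπ1 hπ1 (by norm_num : (0:ℝ) ≤ 3.1415) (by norm_num : (0:ℝ) ≤ 3.1415)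
    rw [sq]; linarith only [h]
  have hp2 : (1:ℝ)/2 ≤ 8/π^2 := by
    rw [div_le_div_iff₀ (by norm_num) (by positivity)]
    linarith only [hπsq16]
  have H1 := chernoff hM (fun l : Fin (2^T) => qaePMF T τ (l:ℕ)) hP
    (fun l => fail (est l)) hsum (8/π^2) hp2 hgood
  have hρeq : (4*(8/π^2)*(1-8/π^2)) = ρ := by
    show _ = 32*(π^2-8)/π^4
    field_simp
    ring
  rw [hρeq] at H1
  have key1 : ∑ y : Fin M → Fin (2^T),
      (if (M:ℝ)/2 ≤ (Finset.univ.filter (fun m : Fin M => fail (est (y m)))).card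
       then ∏ m : Fin M, qaePMF T τ ((y m):ℕ) else 0) ≤ ρ^((M:ℝ)/2) := H1
  refine ⟨key1, le_trans (Finset.sum_le_sum fun y _ => ?_) key1⟩
  by_cases hf : fail (med (fun m => est (y m)))
  · rw [if_pos hf]
    have hcard : (M:ℝ)/2 ≤ ((Finset.univ.filter (fun m : Fin M => fail (est (y m)))).card : ℝ) := by
      set v : Fin M → ℝ := fun m => est (y m) with hvdef
      have hf' : π/2^T < |med v - Real.sin τ^2| := hf
      rcases lt_abs.1 hf' with h | h
      · refine le_trans (hmed v).2 ?_
        have hsubf : Finset.univ.filter (fun m : Fin M => med v ≤ v m)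
            ⊆ Finset.univ.filter (fun m : Fin M => fail (est (y m))) := by
          intro x hx
          simp only [Finset.mem_filter] at hx ⊢
          refine ⟨hx.1, ?_⟩
          show π/2^T < |est (y x) - Real.sin τ^2|
          have h2 : π/2^T < est (y x) - Real.sin τ^2 := by
            have h3 : med v ≤ v x := hx.2
            have h4 : v x = est (y x) := rfl
            linarith [h4 ▸ h3]
          exact lt_of_lt_of_le h2 (le_abs_self _)
        exact_mod_cast Nat.cast_le.2 (Finset.card_le_card hsubf)
      · refine le_trans (hmed v).1 ?_
        have hsubf : Finset.univ.filter (fun m : Fin M => v m ≤ med v)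
            ⊆ Finset.univ.filter (fun m : Fin M => fail (est (y m))) := by
          intro x hx
          simp only [Finset.mem_filter] at hx ⊢
          refine ⟨hx.1, ?_⟩
          show π/2^T < |est (y x) - Real.sin τ^2|
          have h2 : π/2^T < -(est (y x) - Real.sin τ^2) := by
            have h3 : v x ≤ med v := hx.2
            have h4 : v x = est (y x) := rfl
            linarith [h4 ▸ h3]
          exact lt_of_lt_of_le h2 (neg_le_abs _)
        exact_mod_cast Nat.cast_le.2 (Finset.card_le_card hsubf)
    rw [if_pos hcard]
  · rw [if_neg hf]
    split_ifs with h2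
    · exact Finset.prod_nonneg fun mm _ => hP (y mm)
    · exact le_refl 0
end
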